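/- For all nonnegative integers r and s, in GL₃(ℤ_p) one has x_{1122}^{-p^r} · x_{21}^{p^s} · x_{1122}^{p^r} · x_{21}^{-p^s} = x_{21}^{p^s·((1+p)^{2p^r} − 1)}, where the exponent p^s·((1+p)^{2p^r} − 1) is a natural number. -/

import Mathlib

/-! `x21 ^ m` is the transvection `1 + m p E₂₁`, and conjugating a transvection `1 + c E₂₁` by
`diag(a, b, 1)` replaces `c` by `b⁻¹ c a`. For `x1122 ^ p ^ r` this factor is `(1 + p) ^ (2 p ^ r)`,
so the conjugate of `x21 ^ p ^ s` is `x21 ^ (p ^ s (1 + p) ^ (2 p ^ r))`, and the commutator is the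
quotient of the two powers of `x21`. -/

open Matrix

namespace Matrix

variable {n R : Type*} [Fintype n] [DecidableEq n] [CommRing R]

theorem transvection_pow {i j : n} (hij : i ≠ j) (c : R) (m : ℕ) :
    transvection i j c ^ m = transvection i j (m * c) := by
  induction m with
  | zero => simp
  | succ k ih =>
    rw [pow_succ, ih, transvection_mul_transvection_same i j hij]
    congr 1; push_cast; ring

theorem transvection_mul_diagonal {d : n → R} {i j : n} {c c' : R} (h : c * d j = d i * c') :
    transvection i j c * diagonal d = diagonal d * transvection i j c' := by
  ext a b
  simp only [diagonal_mul, mul_diagonal, transvection, add_apply, one_apply, single_apply]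
  split_ifs <;> simp_all
  linear_combination h

end Matrix

theorem stmt_17_general (p : ℕ) [Fact p.Prime]
    (x21 x1122 : GL (Fin 3) ℤ_[p])
    (u : ℤ_[p]ˣ) (hu : (u : ℤ_[p]) = 1 + p)
    (h21 : (x21 : Matrix (Fin 3) (Fin 3) ℤ_[p]) = 1 + Matrix.single 1 0 (p : ℤ_[p]))
    (h1122 : (x1122 : Matrix (Fin 3) (Fin 3) ℤ_[p]) = Matrix.diagonal ![(u : ℤ_[p]), (↑u⁻¹ : ℤ_[p]), 1])
    (r s : ℕ) :
    (x1122 ^ p ^ r)⁻¹ * x21 ^ p ^ s * x1122 ^ p ^ r * (x21 ^ p ^ s)⁻¹ = x21 ^ (p ^ s * ((1 + p) ^ (2 * p ^ r) - 1)) := by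
  have hexp : p ^ s * ((1 + p) ^ (2 * p ^ r) - 1) + p ^ s = p ^ s * (1 + p) ^ (2 * p ^ r) := by
    rw [← Nat.mul_add_one, Nat.sub_add_cancel (Nat.one_le_pow _ _ (by omega))]
  rw [mul_inv_eq_iff_eq_mul, mul_assoc, inv_mul_eq_iff_eq_mul, ← pow_add, hexp]
  have hx21 : (x21 : Matrix (Fin 3) (Fin 3) ℤ_[p]) = transvection 1 0 (p : ℤ_[p]) := h21
  have hdiag : ((x1122 ^ p ^ r : GL (Fin 3) ℤ_[p]) : Matrix (Fin 3) (Fin 3) ℤ_[p]) =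
      diagonal ![(u : ℤ_[p]) ^ p ^ r, (↑u⁻¹ : ℤ_[p]) ^ p ^ r, 1] := by
    rw [Units.val_pow_eq_pow_val, h1122, diagonal_pow]
    congr 1; ext i; fin_cases i <;> simp
  ext : 1
  simp only [Units.val_mul, Units.val_pow_eq_pow_val, hdiag, hx21,
    transvection_pow (show (1 : Fin 3) ≠ 0 by decide)]
  apply transvection_mul_diagonal
  have hu_inv : (↑u⁻¹ : ℤ_[p]) ^ p ^ r * (u : ℤ_[p]) ^ p ^ r = 1 := by
    rw [← mul_pow, Units.inv_mul, one_pow]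
  simp only [cons_val_zero, cons_val_one]
  push_cast [← hu]
  linear_combination (-(p : ℤ_[p]) ^ s * p * (u : ℤ_[p]) ^ p ^ r) * hu_inv

theorem stmt_17 (p : ℕ) [Fact p.Prime] (hp : p ≠ 2)
    (x21 x1122 : GL (Fin 3) ℤ_[p])
    (u : ℤ_[p]ˣ) (hu : (u : ℤ_[p]) = 1 + p)
    (h21 : (x21 : Matrix (Fin 3) (Fin 3) ℤ_[p]) = 1 + Matrix.single 1 0 (p : ℤ_[p]))
    (h1122 : (x1122 : Matrix (Fin 3) (Fin 3) ℤ_[p]) = Matrix.diagonal ![(u : ℤ_[p]), (↑u⁻¹ : ℤ_[p]), 1])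
    (r s : ℕ) :
    (x1122 ^ p ^ r)⁻¹ * x21 ^ p ^ s * x1122 ^ p ^ r * (x21 ^ p ^ s)⁻¹ = x21 ^ (p ^ s * ((1 + p) ^ (2 * p ^ r) - 1)) :=
  stmt_17_general p x21 x1122 u hu h21 h1122 r s
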